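/- Nonlinear WLLN under the Cesàro negative correlation condition (Remark 3, second bullet): under the standing assumptions, define κ_{n,i,k} := 𝔼[(Y_{n,k} − μ⁺_{n,k})(Y_{n,i} − μ⁺_{n,i})] for i ≠ k, and assume that (1/n²) · max(Σ_{1 ≤ i,k ≤ n, i ≠ k} κ_{n,i,k}, 0) → 0 as n → ∞. Then for every ε > 0, V(S_n/n ≥ μ̄_n + ε) → 0 as n → ∞. -/

import Mathlib

open MeasureTheory Filter

noncomputable def upperExp {Ω : Type*} [MeasurableSpace Ω] (Ps : Set (Measure Ω)) (Z : Ω → ℝ) : ℝ :=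
  ⨆ P : Ps, ∫ ω, Z ω ∂(P : Measure Ω)

noncomputable def lowerExp {Ω : Type*} [MeasurableSpace Ω] (Ps : Set (Measure Ω)) (Z : Ω → ℝ) : ℝ :=
  ⨅ P : Ps, ∫ ω, Z ω ∂(P : Measure Ω)

noncomputable def upperCap {Ω : Type*} [MeasurableSpace Ω] (Ps : Set (Measure Ω)) (A : Set Ω) : ℝ :=
  ⨆ P : Ps, ((P : Measure Ω) A).toReal

noncomputable def lowerCap {Ω : Type*} [MeasurableSpace Ω] (Ps : Set (Measure Ω)) (A : Set Ω) : ℝ :=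
  ⨅ P : Ps, ((P : Measure Ω) A).toReal

/-!
Fix `P ∈ 𝒫` and `n`. Off the event `⋃ₖ {|X_k| > n}`, whose probability is at most `ψ_n(1)`,
the truncation does nothing, so `S_n/n ≥ μ̄_n + ε` forces `Σₖ (Y_{n,k} - μ⁺_{n,k}) ≥ n ε`, which
Chebyshev bounds by `E_P[(Σₖ (Y_{n,k} - μ⁺_{n,k}))²] / (n ε)²`. Expanding the square, the
off-diagonal terms are at most `κ_{n,i,k}`, while each diagonal term is at most
`2 E_P[Y_{n,k}²] + 2 (μ⁺_{n,k})²`; both pieces are controlled (the second through Jensen) by the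
layer-cake estimate `E_P[Y_{n,k}²] ≤ 1 + 6 n² ∫₀¹ y V(|X_k| > n y) dy`, whose sum over `k` is
`n + 6 n² ∫₀¹ ψ_n`. As everything is uniform in `P`,
`V(S_n/n ≥ μ̄_n + ε) ≤ ψ_n(1) + (4/n + 24 ∫₀¹ ψ_n + n⁻² max(Σ_{i≠k} κ_{n,i,k}, 0)) / ε²`,
and the three terms vanish: by assumption, by Vitali's convergence theorem, and by the Cesàro
condition.
-/

section UpperExpectation

variable {Ω : Type*} [MeasurableSpace Ω] {Ps : Set (Measure Ω)}

lemma measureReal_le_upperCap (hprob : ∀ P ∈ Ps, IsProbabilityMeasure P) {P : Measure Ω}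
    (hP : P ∈ Ps) (A : Set Ω) : P.real A ≤ upperCap Ps A := by
  refine le_ciSup (f := fun Q : Ps => ((Q : Measure Ω) A).toReal) ⟨1, ?_⟩ ⟨P, hP⟩
  rintro _ ⟨Q, rfl⟩
  have := hprob Q Q.2
  exact measureReal_le_one

lemma upperCap_nonneg (A : Set Ω) : 0 ≤ upperCap Ps A :=
  Real.iSup_nonneg fun _ => ENNReal.toReal_nonneg

lemma upperCap_le (hne : Ps.Nonempty) {A : Set Ω} {c : ℝ} (h : ∀ P ∈ Ps, P.real A ≤ c) :
    upperCap Ps A ≤ c :=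
  have := hne.to_subtype
  ciSup_le fun P => h P P.2

lemma upperCap_mono (hne : Ps.Nonempty) (hprob : ∀ P ∈ Ps, IsProbabilityMeasure P)
    {A B : Set Ω} (hAB : A ⊆ B) : upperCap Ps A ≤ upperCap Ps B :=
  upperCap_le hne fun P hP =>
    have := hprob P hP
    (measureReal_mono hAB).trans (measureReal_le_upperCap hprob hP B)

lemma integral_le_upperExp (hprob : ∀ P ∈ Ps, IsProbabilityMeasure P) {f : Ω → ℝ} {C : ℝ}
    (hf : ∀ ω, |f ω| ≤ C) {P : Measure Ω} (hP : P ∈ Ps) : ∫ ω, f ω ∂P ≤ upperExp Ps f := by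
  refine le_ciSup (f := fun Q : Ps => ∫ ω, f ω ∂(Q : Measure Ω)) ⟨C, ?_⟩ ⟨P, hP⟩
  rintro _ ⟨Q, rfl⟩
  have := hprob Q Q.2
  have h := norm_integral_le_of_norm_le_const (μ := (Q : Measure Ω)) (f := f) (ae_of_all _ hf)
  rw [probReal_univ, mul_one] at h
  exact (le_abs_self _).trans h

lemma abs_upperExp_le (hne : Ps.Nonempty) {f : Ω → ℝ} {C : ℝ}
    (h : ∀ P ∈ Ps, |∫ ω, f ω ∂P| ≤ C) : |upperExp Ps f| ≤ C := by
  obtain ⟨P, hP⟩ := hne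
  have : Nonempty Ps := ⟨⟨P, hP⟩⟩
  have hbdd : BddAbove (Set.range fun Q : Ps => ∫ ω, f ω ∂(Q : Measure Ω)) :=
    ⟨C, by rintro _ ⟨Q, rfl⟩; exact (abs_le.1 (h Q Q.2)).2⟩
  refine abs_le.2 ⟨?_, ciSup_le fun Q => (abs_le.1 (h Q Q.2)).2⟩
  exact (abs_le.1 (h P hP)).1.trans (le_ciSup hbdd ⟨P, hP⟩)

end UpperExpectation

lemma antitone_setOf_mul_lt {Ω : Type*} {c : ℝ} (hc : 0 ≤ c) (f : Ω → ℝ) :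
    Antitone fun y : ℝ => {ω | c * y < f ω} := fun _ _ hyz _ hω =>
  (mul_le_mul_of_nonneg_left hyz hc).trans_lt hω

lemma sq_le_sum_odd_mul_ite {c : ℝ} (n : ℕ) (hc₀ : 0 ≤ c) (hc : c ≤ n + 1) :
    c ^ 2 ≤ ∑ j ∈ Finset.range (n + 1), (2 * (j : ℝ) + 1) * if (j : ℝ) ≤ c then 1 else 0 := by
  have htel : ∑ j ∈ Finset.range (n + 1), (min c ((j : ℝ) + 1) ^ 2 - min c (j : ℝ) ^ 2) =
      c ^ 2 := by
    have := Finset.sum_range_sub (fun j : ℕ => min c (j : ℝ) ^ 2) (n + 1)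
    push_cast at this
    rw [this, min_eq_left hc, min_eq_right hc₀]
    ring
  rw [← htel]
  refine Finset.sum_le_sum fun j _ => ?_
  split_ifs with hj
  · rw [min_eq_right hj, mul_one]
    have : min c ((j : ℝ) + 1) ≤ j + 1 := min_le_right _ _
    nlinarith [le_min hc₀ (by positivity : (0 : ℝ) ≤ j + 1)]
  · rw [not_le] at hj
    rw [min_eq_left hj.le, min_eq_left (by linarith), sub_self, mul_zero]

section SecondMoment

variable {Ω : Type*} [MeasurableSpace Ω] {P : Measure Ω} {W : Ω → ℝ}

lemma antitone_measureReal_tail [IsFiniteMeasure P] {c : ℝ} (hc : 0 ≤ c) (f : Ω → ℝ) :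
    Antitone fun y : ℝ => P.real {ω | c * y < f ω} := fun _ _ hyz =>
  measureReal_mono (antitone_setOf_mul_lt hc f hyz)

lemma integral_sq_le_sum_odd_mul_measureReal [IsFiniteMeasure P] (hW : Measurable W) {n : ℕ}
    (hWn : ∀ ω, |W ω| ≤ n + 1) :
    ∫ ω, W ω ^ 2 ∂P ≤
      ∑ j ∈ Finset.range (n + 1), (2 * (j : ℝ) + 1) * P.real {ω | (j : ℝ) ≤ |W ω|} := by
  have hset (j : ℕ) : MeasurableSet {ω | (j : ℝ) ≤ |W ω|} :=
    measurableSet_le measurable_const hW.abs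
  have hint (j : ℕ) : Integrable
      (fun ω => (2 * (j : ℝ) + 1) * {ω | (j : ℝ) ≤ |W ω|}.indicator 1 ω) P :=
    ((integrable_const 1).indicator (hset j)).const_mul _
  calc ∫ ω, W ω ^ 2 ∂P
      ≤ ∫ ω, ∑ j ∈ Finset.range (n + 1),
          (2 * (j : ℝ) + 1) * {ω | (j : ℝ) ≤ |W ω|}.indicator 1 ω ∂P := by
        refine integral_mono
          (MemLp.of_bound hW.aestronglyMeasurable _ (ae_of_all _ hWn)).integrable_sq
          (integrable_finsetSum _ fun j _ => hint j) fun ω => ?_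
        have h := sq_le_sum_odd_mul_ite n (abs_nonneg (W ω)) (hWn ω)
        rw [sq_abs] at h
        refine h.trans (le_of_eq (Finset.sum_congr rfl fun j _ => ?_))
        simp only [Set.indicator_apply, Set.mem_ofPred_eq, Pi.one_apply]
    _ = _ := by
        rw [integral_finsetSum _ fun j _ => hint j]
        simp only [integral_const_mul, integral_indicator_one (hset _)]

lemma odd_mul_measureReal_le_integral_tail [IsFiniteMeasure P] {n i : ℕ} (hi : i < n) :
    (2 * ((i : ℝ) + 1) + 1) * P.real {ω | (i : ℝ) + 1 ≤ |W ω|} ≤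
      6 * n ^ 2 * ∫ y in (i : ℝ) / n..((i : ℝ) + 1) / n, y * P.real {ω | n * y < |W ω|} := by
  set p := P.real {ω | (i : ℝ) + 1 ≤ |W ω|}
  have hn : (0 : ℝ) < n := by exact_mod_cast (Nat.zero_le i).trans_lt hi
  have hlow : ∫ y in (i : ℝ) / n..((i : ℝ) + 1) / n, y * p ≤
      ∫ y in (i : ℝ) / n..((i : ℝ) + 1) / n, y * P.real {ω | n * y < |W ω|} := by
    refine intervalIntegral.integral_mono_on_of_le_Ioo
      (div_le_div_of_nonneg_right (by linarith) hn.le)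
      ((continuous_id.mul continuous_const).intervalIntegrable _ _)
      ((antitone_measureReal_tail hn.le (|W ·|)).intervalIntegrable.continuousOn_mul
        continuousOn_id) fun y hy => ?_
    have hny : n * y < (i : ℝ) + 1 := by rw [← lt_div_iff₀' hn]; exact hy.2
    refine mul_le_mul_of_nonneg_left (measureReal_mono fun ω (hω : (i : ℝ) + 1 ≤ |W ω|) =>
      hny.trans_le hω) ((div_nonneg i.cast_nonneg hn.le).trans hy.1.le)
  rw [intervalIntegral.integral_mul_const, integral_id] at hlow
  have hp : 0 ≤ p := measureReal_nonneg
  -- `∫_{i/n}^{(i+1)/n} y dy = (2i + 1) / (2n²)` and `2i + 3 ≤ 3 (2i + 1)`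
  calc (2 * ((i : ℝ) + 1) + 1) * p
      ≤ 6 * n ^ 2 * ((((i + 1) / n) ^ 2 - (i / n) ^ 2) / 2 * p) := by
        field_simp
        nlinarith
    _ ≤ _ := by gcongr

lemma integral_sq_le_one_add_integral_tail [IsProbabilityMeasure P] (hW : Measurable W) {n : ℕ}
    (hn : 0 < n) (hWn : ∀ ω, |W ω| ≤ n + 1) :
    ∫ ω, W ω ^ 2 ∂P ≤ 1 + 6 * n ^ 2 * ∫ y in (0 : ℝ)..1, y * P.real {ω | n * y < |W ω|} := by
  have hsplit := intervalIntegral.sum_integral_adjacent_intervals (μ := volume)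
    (a := fun i : ℕ => (i : ℝ) / n) (n := n) (f := fun y => y * P.real {ω | n * y < |W ω|})
    fun _ _ => (antitone_measureReal_tail n.cast_nonneg (|W ·|)).intervalIntegrable.continuousOn_mul
      continuousOn_id
  have hn' : (n : ℝ) ≠ 0 := by positivity
  simp only [Nat.cast_zero, zero_div, div_self hn', Nat.cast_succ] at hsplit
  calc ∫ ω, W ω ^ 2 ∂P
      ≤ ∑ j ∈ Finset.range (n + 1), (2 * (j : ℝ) + 1) * P.real {ω | (j : ℝ) ≤ |W ω|} :=
        integral_sq_le_sum_odd_mul_measureReal hW hWn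
    _ = P.real {ω | (0 : ℝ) ≤ |W ω|} +
          ∑ i ∈ Finset.range n, (2 * ((i : ℝ) + 1) + 1) * P.real {ω | (i : ℝ) + 1 ≤ |W ω|} := by
        rw [Finset.sum_range_succ', add_comm]
        simp
    _ ≤ 1 + ∑ i ∈ Finset.range n, 6 * n ^ 2 *
          ∫ y in (i : ℝ) / n..((i : ℝ) + 1) / n, y * P.real {ω | n * y < |W ω|} :=
        add_le_add measureReal_le_one (Finset.sum_le_sum fun i hi =>
          odd_mul_measureReal_le_integral_tail (Finset.mem_range.1 hi))
    _ = _ := by rw [← Finset.mul_sum, hsplit]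

lemma measureReal_le_integral_sq_div_sq [IsFiniteMeasure P] (hW : Integrable (fun ω => W ω ^ 2) P)
    {a : ℝ} (ha : 0 < a) : P.real {ω | a ≤ W ω} ≤ (∫ ω, W ω ^ 2 ∂P) / a ^ 2 := by
  rw [le_div_iff₀ (by positivity), mul_comm]
  refine le_trans ?_
    (mul_meas_ge_le_integral_of_nonneg (ae_of_all _ fun ω => sq_nonneg (W ω)) hW (a ^ 2))
  exact mul_le_mul_of_nonneg_left
    (measureReal_mono fun ω (h : a ≤ W ω) => pow_le_pow_left₀ ha.le h 2) (sq_nonneg a)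

lemma sq_integral_le_integral_sq [IsProbabilityMeasure P] (hW : MemLp W 2 P) :
    (∫ ω, W ω ∂P) ^ 2 ≤ ∫ ω, W ω ^ 2 ∂P := by
  have := ProbabilityTheory.variance_nonneg W P
  rw [ProbabilityTheory.variance_eq_sub hW] at this
  simpa using this

lemma integral_sq_sub_const_le [IsProbabilityMeasure P] (hW : MemLp W 2 P) (c : ℝ) :
    ∫ ω, (W ω - c) ^ 2 ∂P ≤ 2 * ∫ ω, W ω ^ 2 ∂P + 2 * c ^ 2 := by
  have hW2 := (hW.integrable_sq.const_mul 2).add (integrable_const (2 * c ^ 2))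
  calc ∫ ω, (W ω - c) ^ 2 ∂P ≤ ∫ ω, (2 * W ω ^ 2 + 2 * c ^ 2) ∂P :=
        integral_mono_of_nonneg (ae_of_all _ fun ω => sq_nonneg _) hW2
          (ae_of_all _ fun ω => by nlinarith [sq_nonneg (W ω + c)])
    _ = _ := by
        rw [integral_add (hW.integrable_sq.const_mul 2) (integrable_const _), integral_const_mul]
        simp

lemma integral_sq_sum_le {ι : Type*} [DecidableEq ι] (s : Finset ι) {Z : ι → Ω → ℝ}
    (hZ : ∀ i, MemLp (Z i) 2 P) {κ : ι → ι → ℝ}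
    (hκ : ∀ i ∈ s, ∀ k ∈ s, i ≠ k → ∫ ω, Z i ω * Z k ω ∂P ≤ κ i k) :
    ∫ ω, (∑ k ∈ s, Z k ω) ^ 2 ∂P ≤
      (∑ i ∈ s, ∑ k ∈ s, if i ≠ k then κ i k else 0) + ∑ k ∈ s, ∫ ω, Z k ω ^ 2 ∂P := by
  have hint (i k : ι) : Integrable (fun ω => Z i ω * Z k ω) P := (hZ i).integrable_mul (hZ k)
  have hexpand : ∫ ω, (∑ k ∈ s, Z k ω) ^ 2 ∂P = ∑ i ∈ s, ∑ k ∈ s, ∫ ω, Z i ω * Z k ω ∂P := by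
    simp_rw [sq, Finset.sum_mul_sum]
    rw [integral_finsetSum _ fun i _ => integrable_finsetSum _ fun k _ => hint i k]
    exact Finset.sum_congr rfl fun i _ => integral_finsetSum _ fun k _ => hint i k
  have hdiag : ∑ k ∈ s, ∫ ω, Z k ω ^ 2 ∂P =
      ∑ i ∈ s, ∑ k ∈ s, if i = k then ∫ ω, Z i ω * Z k ω ∂P else 0 := by
    simp [sq]
  rw [hexpand, hdiag, ← Finset.sum_add_distrib]
  refine Finset.sum_le_sum fun i hi => ?_
  rw [← Finset.sum_add_distrib]
  refine Finset.sum_le_sum fun k hk => ?_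
  by_cases hik : i = k <;> simp [hik, hκ i hi k hk]

end SecondMoment

lemma tendsto_integral_of_uniformIntegrable {α E : Type*} [MeasurableSpace α]
    [NormedAddCommGroup E] [NormedSpace ℝ E] {μ : Measure α} [IsFiniteMeasure μ]
    {f : ℕ → α → E} {g : α → E} (hf : UniformIntegrable f 1 μ) (hg : Integrable g μ)
    (hfg : ∀ᵐ x ∂μ, Tendsto (fun n => f n x) atTop (nhds (g x))) :
    Tendsto (fun n => ∫ x, f n x ∂μ) atTop (nhds (∫ x, g x ∂μ)) :=
  tendsto_integral_of_L1' g hg.1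
    (.of_forall fun n => memLp_one_iff_integrable.1 (hf.memLp n))
    (tendsto_Lp_finite_of_tendsto_ae le_rfl ENNReal.one_ne_top (fun n => (hf.memLp n).1)
      (memLp_one_iff_integrable.2 hg) hf.2.1 hfg)

lemma tendsto_intervalIntegral_zero_of_uniformIntegrable {f : ℕ → ℝ → ℝ}
    (hf0 : ∀ y ∈ Set.Icc (0 : ℝ) 1, Tendsto (fun n => f n y) atTop (nhds 0))
    (hf : UniformIntegrable f 1 (volume.restrict (Set.Icc (0 : ℝ) 1))) :
    Tendsto (fun n => ∫ y in (0 : ℝ)..1, f n y) atTop (nhds 0) := by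
  simp_rw [intervalIntegral.integral_of_le zero_le_one, ← integral_Icc_eq_integral_Ioc]
  simpa using tendsto_integral_of_uniformIntegrable hf (integrable_zero _ _ _)
    ((ae_restrict_iff' measurableSet_Icc).2 (.of_forall hf0))

lemma abs_mul_apply_abs_le {φ : ℝ → ℝ} (hφ : ∀ x, φ x ∈ Set.Icc 0 1) (x : ℝ) :
    |x * φ (|x|)| ≤ |x| := by
  rw [abs_mul, abs_of_nonneg (hφ _).1]
  exact mul_le_of_le_one_right (abs_nonneg x) (hφ _).2

lemma abs_mul_apply_abs_le_of_eq_zero {φ : ℝ → ℝ} (hφ : ∀ x, φ x ∈ Set.Icc 0 1) {r : ℝ}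
    (hr : 0 ≤ r) (hφr : ∀ x, r ≤ |x| → φ x = 0) (x : ℝ) : |x * φ (|x|)| ≤ r := by
  rcases lt_or_ge |x| r with hx | hx
  · exact (abs_mul_apply_abs_le hφ x).trans hx.le
  · rw [hφr _ ((abs_abs x).symm ▸ hx), mul_zero, abs_zero]
    exact hr

lemma setOf_mean_add_le_subset {Ω : Type*} {X Y : ℕ → Ω → ℝ} {n : ℕ} (hn : 0 < n)
    (hYeq : ∀ k ω, |X k ω| ≤ n → Y k ω = X k ω) (μ : ℕ → ℝ) (ε : ℝ) :
    {ω | 1 / n * ∑ k ∈ Finset.Icc 1 n, μ k + ε ≤ (∑ k ∈ Finset.Icc 1 n, X k ω) / n} ⊆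
      (⋃ k ∈ Finset.Icc 1 n, {ω | (n : ℝ) < |X k ω|}) ∪
        {ω | n * ε ≤ ∑ k ∈ Finset.Icc 1 n, (Y k ω - μ k)} := by
  intro ω hω
  by_cases htail : ω ∈ ⋃ k ∈ Finset.Icc 1 n, {ω | (n : ℝ) < |X k ω|}
  · exact Or.inl htail
  right
  simp only [Set.mem_iUnion, Set.mem_ofPred_eq, not_exists, not_lt] at htail
  have hsum : ∑ k ∈ Finset.Icc 1 n, Y k ω = ∑ k ∈ Finset.Icc 1 n, X k ω :=
    Finset.sum_congr rfl fun k hk => hYeq k ω (htail k hk)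
  have hn' : (0 : ℝ) < n := by exact_mod_cast hn
  simp only [Set.mem_ofPred_eq, le_div_iff₀ hn'] at hω
  show n * ε ≤ ∑ k ∈ Finset.Icc 1 n, (Y k ω - μ k)
  rw [Finset.sum_sub_distrib, hsum]
  field_simp at hω
  linarith

/-- Up to the factor `2 n²`, this controls the second moment of `Z` truncated at level `n`. -/
noncomputable def tailIntegral {Ω : Type*} [MeasurableSpace Ω] (Ps : Set (Measure Ω))
    (Z : Ω → ℝ) (n : ℕ) : ℝ :=
  ∫ y in (0 : ℝ)..1, y * upperCap Ps {ω | n * y < |Z ω|}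

section Truncation

open Finset

variable {Ω : Type*} [MeasurableSpace Ω] {Ps : Set (Measure Ω)}

lemma intervalIntegrable_mul_upperCap_tail (hne : Ps.Nonempty)
    (hprob : ∀ P ∈ Ps, IsProbabilityMeasure P) (Z : Ω → ℝ) (n : ℕ) (a b : ℝ) :
    IntervalIntegrable (fun y => y * upperCap Ps {ω | n * y < |Z ω|}) volume a b :=
  Antitone.intervalIntegrable (fun _ _ hyz => upperCap_mono hne hprob
    (antitone_setOf_mul_lt n.cast_nonneg (|Z ·|) hyz)) |>.continuousOn_mul continuousOn_id

lemma tailIntegral_nonneg (Z : Ω → ℝ) (n : ℕ) : 0 ≤ tailIntegral Ps Z n :=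
  intervalIntegral.integral_nonneg zero_le_one fun _ hy => mul_nonneg hy.1 (upperCap_nonneg _)

variable {n : ℕ}

lemma sum_tailIntegral_eq (hne : Ps.Nonempty) (hprob : ∀ P ∈ Ps, IsProbabilityMeasure P)
    {X : ℕ → Ω → ℝ} {ψ : ℝ → ℝ}
    (hψ : ∀ y, ψ y = ∑ k ∈ Icc 1 n, y * upperCap Ps {ω | n * y < |X k ω|}) :
    ∑ k ∈ Icc 1 n, tailIntegral Ps (X k) n = ∫ y in (0 : ℝ)..1, ψ y := by
  simp_rw [hψ]
  rw [intervalIntegral.integral_finsetSum fun k _ =>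
    intervalIntegrable_mul_upperCap_tail hne hprob (X k) n 0 1]
  rfl

lemma integral_sq_le_tailIntegral (hne : Ps.Nonempty) (hprob : ∀ P ∈ Ps, IsProbabilityMeasure P)
    {X Y : Ω → ℝ} (hY : Measurable Y) (hn : 0 < n) (hYX : ∀ ω, |Y ω| ≤ |X ω|) (hYn : ∀ ω, |Y ω| ≤ n + 1)
    {P : Measure Ω} (hP : P ∈ Ps) :
    ∫ ω, Y ω ^ 2 ∂P ≤ 1 + 6 * n ^ 2 * tailIntegral Ps X n := by
  have := hprob P hP
  refine (integral_sq_le_one_add_integral_tail hY hn hYn).trans ?_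
  gcongr 1 + 6 * n ^ 2 * ?_
  refine intervalIntegral.integral_mono_on zero_le_one
    ((antitone_measureReal_tail (P := P) n.cast_nonneg (|Y ·|)).intervalIntegrable.continuousOn_mul
      continuousOn_id) (intervalIntegrable_mul_upperCap_tail hne hprob X n 0 1) fun y hy => ?_
  exact mul_le_mul_of_nonneg_left ((measureReal_mono fun ω (h : n * y < |Y ω|) =>
    h.trans_le (hYX ω)).trans (measureReal_le_upperCap hprob hP _)) hy.1

lemma sq_upperExp_le_tailIntegral (hne : Ps.Nonempty) (hprob : ∀ P ∈ Ps, IsProbabilityMeasure P)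
    {X Y : Ω → ℝ} (hY : Measurable Y) (hn : 0 < n) (hYX : ∀ ω, |Y ω| ≤ |X ω|) (hYn : ∀ ω, |Y ω| ≤ n + 1) :
    upperExp Ps Y ^ 2 ≤ 1 + 6 * n ^ 2 * tailIntegral Ps X n := by
  rw [← sq_abs, ← Real.le_sqrt (abs_nonneg _) (by positivity [tailIntegral_nonneg (Ps := Ps) X n])]
  refine abs_upperExp_le hne fun P hP => Real.abs_le_sqrt ?_
  have := hprob P hP
  exact (sq_integral_le_integral_sq (MemLp.of_bound hY.aestronglyMeasurable _
    (ae_of_all _ hYn))).trans (integral_sq_le_tailIntegral hne hprob hY hn hYX hYn hP)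

lemma integral_sq_sum_sub_upperExp_le (hne : Ps.Nonempty)
    (hprob : ∀ P ∈ Ps, IsProbabilityMeasure P) {X Y : ℕ → Ω → ℝ} (hn : 0 < n)
    (hY : ∀ k, Measurable (Y k)) (hYX : ∀ k ω, |Y k ω| ≤ |X k ω|)
    (hYn : ∀ k ω, |Y k ω| ≤ n + 1) {μ : ℕ → ℝ} (hμ : ∀ k, μ k = upperExp Ps (Y k))
    {κ : ℕ → ℕ → ℝ} (hκ : ∀ i k, κ i k = upperExp Ps (fun ω => (Y k ω - μ k) * (Y i ω - μ i)))
    {P : Measure Ω} (hP : P ∈ Ps) :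
    ∫ ω, (∑ k ∈ Icc 1 n, (Y k ω - μ k)) ^ 2 ∂P ≤
      max (∑ i ∈ Icc 1 n, ∑ k ∈ Icc 1 n, if i ≠ k then κ i k else 0) 0 +
        (4 * n + 24 * n ^ 2 * ∑ k ∈ Icc 1 n, tailIntegral Ps (X k) n) := by
  have := hprob P hP
  have hYmem (k : ℕ) : MemLp (Y k) 2 P :=
    .of_bound (hY k).aestronglyMeasurable _ (ae_of_all _ (hYn k))
  have hZ (k : ℕ) (ω : Ω) : |Y k ω - μ k| ≤ n + 1 + |μ k| :=
    (abs_sub _ _).trans (add_le_add_left (hYn k ω) _)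
  have hcross (i k : ℕ) : ∫ ω, (Y i ω - μ i) * (Y k ω - μ k) ∂P ≤ κ i k := by
    simp_rw [hκ, mul_comm (Y i _ - μ i)]
    refine integral_le_upperExp hprob (C := (n + 1 + |μ k|) * (n + 1 + |μ i|)) (fun ω => ?_) hP
    rw [abs_mul]
    exact mul_le_mul (hZ k ω) (hZ i ω) (abs_nonneg _) (by positivity)
  have hdiag (k : ℕ) :
      ∫ ω, (Y k ω - μ k) ^ 2 ∂P ≤ 4 * (1 + 6 * n ^ 2 * tailIntegral Ps (X k) n) := by
    have hY2 := integral_sq_le_tailIntegral hne hprob (hY k) hn (hYX k) (hYn k) hP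
    have hμ2 := hμ k ▸ sq_upperExp_le_tailIntegral hne hprob (hY k) hn (hYX k) (hYn k)
    linarith [integral_sq_sub_const_le (hYmem k) (μ k)]
  refine (integral_sq_sum_le _ (fun k => (hYmem k).sub (memLp_const (μ k)))
    fun i _ k _ _ => hcross i k).trans (add_le_add (le_max_left _ _) ?_)
  calc ∑ k ∈ Icc 1 n, ∫ ω, (Y k ω - μ k) ^ 2 ∂P
      ≤ ∑ k ∈ Icc 1 n, 4 * (1 + 6 * n ^ 2 * tailIntegral Ps (X k) n) :=
        sum_le_sum fun k _ => hdiag k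
    _ = _ := by simp [mul_add, sum_add_distrib, ← mul_sum]; ring

lemma upperCap_mean_add_le (hne : Ps.Nonempty) (hprob : ∀ P ∈ Ps, IsProbabilityMeasure P)
    {X Y : ℕ → Ω → ℝ} (hn : 0 < n) (hY : ∀ k, Measurable (Y k))
    (hYX : ∀ k ω, |Y k ω| ≤ |X k ω|) (hYn : ∀ k ω, |Y k ω| ≤ n + 1)
    (hYeq : ∀ k ω, |X k ω| ≤ n → Y k ω = X k ω) {μ : ℕ → ℝ} (hμ : ∀ k, μ k = upperExp Ps (Y k))
    {κ : ℕ → ℕ → ℝ} (hκ : ∀ i k, κ i k = upperExp Ps (fun ω => (Y k ω - μ k) * (Y i ω - μ i)))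
    {ψ : ℝ → ℝ} (hψ : ∀ y, ψ y = ∑ k ∈ Icc 1 n, y * upperCap Ps {ω | n * y < |X k ω|})
    {ε : ℝ} (hε : 0 < ε) :
    upperCap Ps {ω | 1 / n * ∑ k ∈ Icc 1 n, μ k + ε ≤ (∑ k ∈ Icc 1 n, X k ω) / n} ≤
      ψ 1 + (4 * (1 / n) + 24 * (∫ y in (0 : ℝ)..1, ψ y) +
        1 / n ^ 2 * max (∑ i ∈ Icc 1 n, ∑ k ∈ Icc 1 n, if i ≠ k then κ i k else 0) 0) / ε ^ 2 := by
  refine upperCap_le hne fun P hP => ?_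
  have := hprob P hP
  have hn' : (0 : ℝ) < n := by exact_mod_cast hn
  have hT : Integrable (fun ω => (∑ k ∈ Icc 1 n, (Y k ω - μ k)) ^ 2) P :=
    (memLp_finsetSum _ fun k _ => (MemLp.of_bound (hY k).aestronglyMeasurable _
      (ae_of_all _ (hYn k))).sub (memLp_const (μ k))).integrable_sq
  have htail : P.real (⋃ k ∈ Icc 1 n, {ω | (n : ℝ) < |X k ω|}) ≤ ψ 1 := by
    simp only [hψ, one_mul, mul_one]
    exact (measureReal_biUnion_finset_le _ _).trans
      (sum_le_sum fun k _ => measureReal_le_upperCap hprob hP _)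
  calc P.real {ω | 1 / n * ∑ k ∈ Icc 1 n, μ k + ε ≤ (∑ k ∈ Icc 1 n, X k ω) / n}
      ≤ P.real (⋃ k ∈ Icc 1 n, {ω | (n : ℝ) < |X k ω|}) +
          P.real {ω | n * ε ≤ ∑ k ∈ Icc 1 n, (Y k ω - μ k)} :=
        (measureReal_mono (setOf_mean_add_le_subset hn hYeq μ ε)).trans (measureReal_union_le _ _)
    _ ≤ ψ 1 + (max (∑ i ∈ Icc 1 n, ∑ k ∈ Icc 1 n, if i ≠ k then κ i k else 0) 0 +
          (4 * n + 24 * n ^ 2 * ∑ k ∈ Icc 1 n, tailIntegral Ps (X k) n)) / (n * ε) ^ 2 :=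
        add_le_add htail ((measureReal_le_integral_sq_div_sq hT (by positivity)).trans
          (div_le_div_of_nonneg_right
            (integral_sq_sum_sub_upperExp_le hne hprob hn hY hYX hYn hμ hκ hP) (by positivity)))
    _ = _ := by
        rw [sum_tailIntegral_eq hne hprob hψ]
        field_simp
        ring

end Truncation

/-- nonlinear WLLN under the Cesàro negative correlation condition
(Remark 3, second bullet): if (1/n²)·max(Σ_{i≠k} κ_{n,i,k}, 0) → 0, then for
every ε > 0, V(Sₙ/n ≥ μ̄ₙ + ε) → 0. -/
theorem nonlinear_wlln_cesaro_negative_correlation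
    {Ω : Type*} [MeasurableSpace Ω] (Ps : Set (Measure Ω)) (hne : Ps.Nonempty)
    (hprob : ∀ P ∈ Ps, IsProbabilityMeasure P)
    (X : ℕ → Ω → ℝ) (hX : ∀ k, Measurable (X k))
    (χ : ℕ → ℝ → ℝ)
    (hχLip : ∀ n, ∃ K : NNReal, LipschitzWith K (χ n))
    (hχone : ∀ n : ℕ, ∀ x : ℝ, |x| ≤ (n : ℝ) → χ n x = 1)
    (hχzero : ∀ n : ℕ, ∀ x : ℝ, (n : ℝ) + 1 ≤ |x| → χ n x = 0)
    (hχrange : ∀ n : ℕ, ∀ x : ℝ, χ n x ∈ Set.Icc (0 : ℝ) 1)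
    (Y : ℕ → ℕ → Ω → ℝ) (hY : ∀ n k, Y n k = fun ω => X k ω * χ n |X k ω|)
    (S : ℕ → Ω → ℝ) (hS : ∀ n, S n = fun ω => ∑ k ∈ Finset.Icc 1 n, X k ω)
    (ψ : ℕ → ℝ → ℝ)
    (hψ : ∀ n : ℕ, ∀ y : ℝ, ψ n y = ∑ k ∈ Finset.Icc 1 n, y * upperCap Ps {ω | (n : ℝ) * y < |X k ω|})
    (hψ0 : ∀ y ∈ Set.Icc (0 : ℝ) 1, Tendsto (fun n => ψ n y) atTop (nhds 0))
    (hUI : UniformIntegrable (fun n : ℕ => ψ n) 1 (volume.restrict (Set.Icc (0 : ℝ) 1)))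
    (μp : ℕ → ℕ → ℝ) (hμp : ∀ n k, μp n k = upperExp Ps (Y n k))
    (μbar : ℕ → ℝ) (hμbar : ∀ n : ℕ, μbar n = (1 / (n : ℝ)) * ∑ k ∈ Finset.Icc 1 n, μp n k)
    (κ : ℕ → ℕ → ℕ → ℝ)
    (hκ : ∀ n i k : ℕ, κ n i k = upperExp Ps (fun ω => (Y n k ω - μp n k) * (Y n i ω - μp n i)))
    (hces : Tendsto (fun n : ℕ => (1 / (n : ℝ) ^ 2) *
      max (∑ i ∈ Finset.Icc 1 n, ∑ k ∈ Finset.Icc 1 n, if i ≠ k then κ n i k else 0) 0)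
      atTop (nhds 0))
    :
    ∀ ε : ℝ, 0 < ε →
      Tendsto (fun n => upperCap Ps {ω | μbar n + ε ≤ S n ω / n}) atTop (nhds 0) := by
  intro ε hε
  have hI := tendsto_intervalIntegral_zero_of_uniformIntegrable hψ0 hUI
  have hbound := (hψ0 1 ⟨zero_le_one, le_rfl⟩).add
    ((((tendsto_one_div_atTop_nhds_zero_nat.const_mul 4).add (hI.const_mul 24)).add hces).div_const
      (ε ^ 2))
  simp only [mul_zero, add_zero, zero_div] at hbound
  refine squeeze_zero' (.of_forall fun n => upperCap_nonneg _) ?_ hbound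
  filter_upwards [eventually_gt_atTop 0] with n hn
  obtain ⟨K, hK⟩ := hχLip n
  simp only [hμbar, hS]
  exact upperCap_mean_add_le hne hprob hn
    (fun k => hY n k ▸ (hX k).mul (hK.continuous.measurable.comp (hX k).abs))
    (fun k ω => hY n k ▸ abs_mul_apply_abs_le (hχrange n) _)
    (fun k ω => hY n k ▸ abs_mul_apply_abs_le_of_eq_zero (hχrange n) (by positivity) (hχzero n) _)
    (fun k ω hXk => by simp only [hY, hχone n |X k ω| (by rwa [abs_abs]), mul_one])
    (hμp n) (hκ n) (hψ n) hε
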